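/- Let α = (α_1,…,α_n) be a composition with n ≥ 2 and let 1 ≤ m < n. The skew diagram δ_α/(m) is a sum of fat staircases if and only if α_j > 1 for every j = 1,…,n−1. -/
import Mathlib


open Finset

/-- A diagram is a finite set of cells `(row, column)`. -/
abbrev Diagram := Finset (ℕ × ℕ)

def ht (D : Diagram) : ℕ := D.sup (fun c => c.1 + 1)
def wd (D : Diagram) : ℕ := D.sup (fun c => c.2 + 1)

/-- A semistandard Young tableau of shape `D` (entries are 0-based: the paper's
value `v` corresponds to the entry `v - 1`). -/
structure SSYT (D : Diagram) where
  entry : ℕ × ℕ → ℕ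
  rowWeak : ∀ i j, (i, j) ∈ D → (i, j + 1) ∈ D → entry (i, j) ≤ entry (i, j + 1)
  colStrict : ∀ i j, (i, j) ∈ D → (i + 1, j) ∈ D → entry (i, j) < entry (i + 1, j)
  zero_outside : ∀ c, c ∉ D → entry c = 0

/-- The content of a tableau: `content T v` is the number of cells with entry `v`. -/
noncomputable def content {D : Diagram} (T : SSYT D) : ℕ →₀ ℕ := ∑ c ∈ D, Finsupp.single (T.entry c) 1

/-- `c'` is read before (or equal to) `c` in the reading word:
rows top to bottom, each row right to left. -/
def ReadBefore (c' c : ℕ × ℕ) : Prop := c'.1 < c.1 ∨ (c'.1 = c.1 ∧ c.2 ≤ c'.2)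

instance (c' c : ℕ × ℕ) : Decidable (ReadBefore c' c) := by
  unfold ReadBefore; infer_instance

/-- The reading word of `T` is lattice. -/
def IsLattice {D : Diagram} (T : SSYT D) : Prop :=
  ∀ c ∈ D, ∀ v : ℕ,
    (D.filter (fun c' => ReadBefore c' c ∧ T.entry c' = v + 1)).card ≤
    (D.filter (fun c' => ReadBefore c' c ∧ T.entry c' = v)).card

/-- The skew Schur function of a diagram, as a power series in `x_0, x_1, …`:
the coefficient of the monomial with exponents `d` is the number of SSYT of
shape `D` and content `d`. -/
noncomputable def schurOf (D : Diagram) : MvPowerSeries ℕ ℤ :=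
  fun d => (Nat.card {T : SSYT D // content T = d} : ℤ)

/-- Number of lattice SSYT of shape `D` and content `d`. -/
noncomputable def lrCount (D : Diagram) (d : ℕ →₀ ℕ) : ℕ :=
  Nat.card {T : SSYT D // IsLattice T ∧ content T = d}

/-- Littlewood–Richardson coefficient `c^lam_{mu, d}` (Littlewood–Richardson rule). -/
noncomputable def lrCoeff (lam mu : YoungDiagram) (d : ℕ →₀ ℕ) : ℕ :=
  lrCount (lam.cells \ mu.cells) d

def diagramOfRows (L : List ℕ) : Diagram :=
  (Finset.range L.length).biUnion (fun i => (Finset.range (L.getD i 0)).image (fun j => (i, j)))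

/-- The row lengths of the fat staircase `δ_α`. -/
def staircaseRows (α : List ℕ) : List ℕ :=
  ((List.range α.length).reverse.map (fun i => List.replicate (α.getD i 0) (i + 1))).flatten

/-- The fat staircase `δ_α = (n^{α_n}, …, 1^{α_1})` for `α = (α_1, …, α_n)`. -/
def fatStaircase (α : List ℕ) : Diagram := diagramOfRows (staircaseRows α)

/-- 180 degree rotation of a diagram. -/
def rotD (D : Diagram) : Diagram :=
  D.image (fun c => (ht D - 1 - c.1, wd D - 1 - c.2))

/-- The sequence of row lengths of a diagram, as a finitely supported function. -/
noncomputable def rowContent (D : Diagram) : ℕ →₀ ℕ := ∑ c ∈ D, Finsupp.single c.1 1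

/-- A content (partition) `d` is a fat staircase. -/
def IsFatStaircase (d : ℕ →₀ ℕ) : Prop :=
  ∃ α : List ℕ, (∀ a ∈ α, 0 < a) ∧ d = rowContent (fatStaircase α)

/-- Every Schur function appearing in the expansion of `s_D` is indexed by a fat staircase. -/
def IsSumOfFatStaircases (D : Diagram) : Prop :=
  ∀ d, lrCount D d ≠ 0 → IsFatStaircase d

/-- Near-concatenation of depth `i`. -/
def nearConcat (i : ℕ) (D1 D2 : Diagram) : Diagram :=
  D1.image (fun c => (c.1 + (ht D2 - i), c.2)) ∪ D2.image (fun c => (c.1, c.2 + wd D1))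

/-- Direct sum of diagrams. -/
def directSum (D1 D2 : Diagram) : Diagram := nearConcat 0 D1 D2

/-- A single column of `l` boxes. -/
def colD (l : ℕ) : Diagram := (Finset.range l).image (fun i => (i, 0))

/-- A single row of `m` boxes. -/
def rowD (m : ℕ) : Diagram := (Finset.range m).image (fun j => (0, j))

def colLenAt (D : Diagram) (j : ℕ) : ℕ := (D.filter (fun c => c.2 = j)).card
noncomputable def leftCol (D : Diagram) : ℕ := sInf {j | ∃ i, (i, j) ∈ D}
noncomputable def blCol (D : Diagram) : ℕ := sInf {j | (ht D - 1, j) ∈ D}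
noncomputable def topRow (D : Diagram) : ℕ := sInf {i | ∃ j, (i, j) ∈ D}
noncomputable def tlCol (D : Diagram) : ℕ := sInf {j | (topRow D, j) ∈ D}
def lastRowLen (D : Diagram) : ℕ := (D.filter (fun c => c.1 = ht D - 1)).card

/-- `S(F, E; k)`: the foundation `F` is placed immediately below `E`, with the
first row of `F` beginning one box below and `k` boxes left of the bottom-left
box of `E`. -/
noncomputable def SDiagG (F E : Diagram) (k : ℕ) : Diagram :=
  E.image (fun c => (c.1, c.2 + tlCol F + k)) ∪
  F.image (fun c => (c.1 + ht E, c.2 + blCol E))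

/-- `S(λ, μ, E; k)` with foundation the skew diagram `λ/μ`. -/
noncomputable def SDiag (lam mu : YoungDiagram) (E : Diagram) (k : ℕ) : Diagram :=
  SDiagG (lam.cells \ mu.cells) E k

/-- The set `R_{α,k}` (values as in the paper, i.e. 1-based). -/
def Rset (α : List ℕ) (k : ℕ) : Set ℕ :=
  {v | ∃ j, 1 ≤ j ∧ j ≤ α.length ∧ v = 1 + (α.drop (α.length - j)).sum} ∪
  {v | v = 1 ∧ 0 < k}

def rectD (a b : ℕ) : Diagram := Finset.range a ×ˢ Finset.range b

/-- The complement `D^c` of `D` in the `a × b` rectangle: the 180 degree rotation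
of the set-theoretic complement of `D` in the rectangle. -/
def complD (a b : ℕ) (D : Diagram) : Diagram :=
  (rectD a b \ D).image (fun c => (a - 1 - c.1, b - 1 - c.2))

def IsSkewDiagram (D : Diagram) : Prop :=
  ∃ lam mu : YoungDiagram, mu ≤ lam ∧ D = lam.cells \ mu.cells

def diagramOfF (d : ℕ →₀ ℕ) : Diagram :=
  d.support.biUnion (fun i => (Finset.range (d i)).image (fun j => (i, j)))

/-- A symmetric function is Schur-positive when it is a nonnegative integer
combination of Schur functions of partitions. -/
def SchurPositive (f : MvPowerSeries ℕ ℤ) : Prop :=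
  ∃ (S : Finset (ℕ →₀ ℕ)) (a : (ℕ →₀ ℕ) → ℕ),
    (∀ d ∈ S, ∀ i, d (i + 1) ≤ d i) ∧
    f = ∑ d ∈ S, (a d : ℤ) • schurOf (diagramOfF d)

def AdjCell (c c' : ℕ × ℕ) : Prop :=
  (c.1 = c'.1 ∧ (c.2 + 1 = c'.2 ∨ c'.2 + 1 = c.2)) ∨
  (c.2 = c'.2 ∧ (c.1 + 1 = c'.1 ∨ c'.1 + 1 = c.1))

def ConnectedDiagram (D : Diagram) : Prop :=
  ∀ c ∈ D, ∀ c' ∈ D, Relation.ReflTransGen (fun a b => a ∈ D ∧ b ∈ D ∧ AdjCell a b) c c'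

section Helpers

/-- A downward-closed finset of naturals is an initial segment. -/
lemma dcFinset (s : Finset ℕ) (h : ∀ x y, x ≤ y → y ∈ s → x ∈ s) :
    s = Finset.range s.card := by
  have key : ∀ x, x ∈ s ↔ x < s.card := by
    intro x
    constructor
    · intro hx
      have hsub : Finset.range (x + 1) ⊆ s := by
        intro y hy
        exact h y x (by simpa using Nat.lt_succ_iff.mp (Finset.mem_range.mp hy)) hx
      have := Finset.card_le_card hsub
      simpa using this
    · intro hx
      by_contra hxs
      have hsub : s ⊆ Finset.range x := by
        intro y hy
        rcases lt_or_ge y x with h' | h'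
        · simpa using h'
        · exact absurd (h x y h' hy) hxs
      have := Finset.card_le_card hsub
      simp at this
      omega
  ext x
  simp [key]

lemma mem_diagramOfRows (L : List ℕ) (i j : ℕ) :
    (i, j) ∈ diagramOfRows L ↔ j < L.getD i 0 := by
  unfold diagramOfRows
  simp only [Finset.mem_biUnion, Finset.mem_range, Finset.mem_image]
  constructor
  · rintro ⟨i', hi', j', hj', h⟩
    cases h
    simpa using hj'
  · intro hj
    have hi : i < L.length := by
      by_contra hi
      rw [List.getD_eq_default] at hj
      · omega
      · omega
    exact ⟨i, hi, j, by simpa using hj, rfl⟩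

lemma mem_rowD (k i j : ℕ) : (i, j) ∈ rowD k ↔ i = 0 ∧ j < k := by
  unfold rowD
  simp only [Finset.mem_image, Finset.mem_range]
  constructor
  · rintro ⟨j', hj', h⟩
    cases h
    exact ⟨rfl, hj'⟩
  · rintro ⟨rfl, hj⟩
    exact ⟨j, hj, rfl⟩

lemma content_apply {D : Diagram} (T : SSYT D) (w : ℕ) :
    content T w = (D.filter (fun c => T.entry c = w)).card := by
  unfold content
  rw [Finsupp.finset_sum_apply]
  rw [Finset.card_filter]
  congr 1
  ext c
  rw [Finsupp.single_apply]

lemma rowContent_apply (D : Diagram) (i : ℕ) :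
    rowContent D i = (D.filter (fun c => c.1 = i)).card := by
  unfold rowContent
  rw [Finsupp.finset_sum_apply]
  rw [Finset.card_filter]
  congr 1
  ext c
  rw [Finsupp.single_apply]

lemma rowContent_diagramOfRows (L : List ℕ) (i : ℕ) :
    rowContent (diagramOfRows L) i = L.getD i 0 := by
  rw [rowContent_apply]
  have : (diagramOfRows L).filter (fun c => c.1 = i)
      = (Finset.range (L.getD i 0)).image (fun j => (i, j)) := by
    ext ⟨i', j⟩
    simp only [Finset.mem_filter, Finset.mem_image, Finset.mem_range]
    constructor
    · rintro ⟨hm, rfl⟩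
      exact ⟨j, (mem_diagramOfRows L i' j).mp hm, rfl⟩
    · rintro ⟨j', hj', h⟩
      cases h
      exact ⟨(mem_diagramOfRows L _ _).mpr hj', rfl⟩
  rw [this, Finset.card_image_of_injective _ (fun a b h => by simpa using h),
    Finset.card_range]

lemma SSYT.ext' {D : Diagram} (T T' : SSYT D)
    (h : ∀ c ∈ D, T.entry c = T'.entry c) : T = T' := by
  cases T with
  | mk e rw cs zo =>
    cases T' with
    | mk e' rw' cs' zo' =>
      simp only [SSYT.mk.injEq]
      funext c
      by_cases hc : c ∈ D
      · exact h c hc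
      · rw [zo c hc, zo' c hc]

lemma finite_lattice_subtype (D : Diagram) (d : ℕ →₀ ℕ) :
    Finite {T : SSYT D // IsLattice T ∧ content T = d} := by
  set K := (d.support.sup id) + 1 with hK
  have hb : ∀ (T : SSYT D), content T = d → ∀ c ∈ D, T.entry c < K := by
    intro T hT c hc
    have h1 : 0 < content T (T.entry c) := by
      rw [content_apply]
      refine Finset.card_pos.mpr ⟨c, ?_⟩
      simp [hc]
    have hs : T.entry c ∈ d.support := by
      rw [Finsupp.mem_support_iff]
      rw [hT] at h1
      omega
    have := Finset.le_sup (f := id) hs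
    simp only [id] at this
    omega
  have : Function.Injective
      (fun (T : {T : SSYT D // IsLattice T ∧ content T = d}) =>
        (fun c : {c // c ∈ D} => (⟨T.1.entry c.1, hb T.1 T.2.2 c.1 c.2⟩ : Fin K))) := by
    intro T T' h
    ext1
    apply SSYT.ext'
    intro c hc
    have := congrFun h ⟨c, hc⟩
    simpa using congrArg Fin.val this
  exact Finite.of_injective _ this

end Helpers

section Staircase

/-- getD of replicate ++ list. -/
lemma getD_replicate_append (a x : ℕ) (l : List ℕ) (i : ℕ) :
    (List.replicate a x ++ l).getD i 0 = if i < a then x else l.getD (i - a) 0 := by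
  split_ifs with h
  · rw [List.getD_append]
    · simp [List.getD_eq_getElem?_getD, List.getElem?_replicate, h]
    · simpa using h
  · rw [List.getD_append_right]
    · simp
    · simpa using h

lemma staircaseRows_concat (β : List ℕ) (a : ℕ) :
    staircaseRows (β ++ [a]) = List.replicate a (β.length + 1) ++ staircaseRows β := by
  unfold staircaseRows
  have hlen : (β ++ [a]).length = β.length + 1 := by simp
  rw [hlen]
  rw [List.range_succ, List.reverse_append]
  simp only [List.reverse_singleton, List.singleton_append, List.map_cons,
    List.flatten_cons]
  congr 1
  · congr 1
    rw [List.getD_append_right] <;> simp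
  · congr 1
    apply List.map_congr_left
    intro i hi
    have hi' : i < β.length := by
      simp only [List.mem_reverse, List.mem_range] at hi
      exact hi
    congr 1
    rw [List.getD_append]
    exact hi'

lemma staircaseRows_ub (β : List ℕ) : ∀ x ∈ staircaseRows β, x ≤ β.length := by
  induction β using List.reverseRecOn with
  | nil => intro x hx; simp [staircaseRows] at hx
  | append_singleton γ a ih =>
    intro x hx
    rw [staircaseRows_concat] at hx
    simp only [List.mem_append, List.mem_replicate] at hx
    rcases hx with ⟨_, rfl⟩ | hx
    · simp
    · have := ih x hx
      simp
      omega

lemma staircaseRows_head (β : List ℕ) (hβ : β ≠ [])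
    (hl : 0 < β.getD (β.length - 1) 0) :
    (staircaseRows β).getD 0 0 = β.length := by
  induction β using List.reverseRecOn with
  | nil => simp at hβ
  | append_singleton γ a _ =>
    rw [staircaseRows_concat]
    have ha : 0 < a := by
      have : (γ ++ [a]).getD ((γ ++ [a]).length - 1) 0 = a := by
        rw [List.getD_append_right] <;> simp
      rwa [this] at hl
    rw [getD_replicate_append]
    simp [ha]

lemma staircaseRows_getD_ub (γ : List ℕ) (i : ℕ) :
    (staircaseRows γ).getD i 0 ≤ γ.length := by
  by_cases hc : i < (staircaseRows γ).length
  · rw [List.getD_eq_getElem _ _ hc]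
    exact staircaseRows_ub γ _ (List.getElem_mem _)
  · rw [List.getD_eq_default _ _ (by omega)]
    omega

lemma staircaseRows_anti (β : List ℕ) (hβ : ∀ b ∈ β, 0 < b) :
    ∀ i, (staircaseRows β).getD (i+1) 0 ≤ (staircaseRows β).getD i 0 := by
  induction β using List.reverseRecOn with
  | nil => intro i; simp [staircaseRows]
  | append_singleton γ a ih =>
    intro i
    rw [staircaseRows_concat, getD_replicate_append, getD_replicate_append]
    have hγ : ∀ b ∈ γ, 0 < b := fun b hb => hβ b (by simp [hb])
    by_cases h2 : i + 1 < a
    · simp [h2, show i < a by omega]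
    by_cases h3 : i < a
    · simp only [h2, h3, if_true, if_false]
      have := staircaseRows_getD_ub γ (i + 1 - a)
      omega
    · simp only [h2, h3, if_false]
      have he : i + 1 - a = (i - a) + 1 := by omega
      rw [he]
      exact ih hγ (i - a)

lemma staircaseRows_step (β : List ℕ) (hβ : ∀ b ∈ β, 0 < b) :
    ∀ i, (staircaseRows β).getD i 0 ≤ (staircaseRows β).getD (i+1) 0 + 1 := by
  induction β using List.reverseRecOn with
  | nil => intro i; simp [staircaseRows]
  | append_singleton γ a ih =>
    intro i
    rw [staircaseRows_concat, getD_replicate_append, getD_replicate_append]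
    have hγ : ∀ b ∈ γ, 0 < b := fun b hb => hβ b (by simp [hb])
    by_cases h2 : i + 1 < a
    · simp [h2, show i < a by omega]
    by_cases h3 : i < a
    · simp only [h2, h3, if_true, if_false]
      rcases List.eq_nil_or_concat γ with rfl | ⟨γ', b, rfl⟩
      · have : staircaseRows ([] : List ℕ) = [] := rfl
        simp [this]
      · simp only [List.concat_eq_append] at *
        have h0 : (staircaseRows (γ' ++ [b])).getD 0 0 = (γ' ++ [b]).length := by
          apply staircaseRows_head _ (by simp)
          rw [List.getD_append_right] <;> simp [hγ b (by simp)]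
        have he : i + 1 - a = 0 := by omega
        rw [he, h0]
    · simp only [h2, h3, if_false]
      have he : i + 1 - a = (i - a) + 1 := by omega
      rw [he]
      exact ih hγ (i - a)

end Staircase

section Staircase2

lemma getD_sra (β : List ℕ) (a i : ℕ) :
    (staircaseRows (β ++ [a])).getD i 0
      = if i < a then β.length + 1 else (staircaseRows β).getD (i - a) 0 := by
  rw [staircaseRows_concat, getD_replicate_append]

/-- If all interior multiplicities are ≥ 2, a unit drop in the staircase row list is
followed by a repeat. -/
lemma staircaseRows_hbd (α : List ℕ) (hα : ∀ a ∈ α, 0 < a)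
    (hgt : ∀ j, j + 1 < α.length → 1 < α.getD j 0) :
    ∀ i, (staircaseRows α).getD i 0 = (staircaseRows α).getD (i+1) 0 + 1 →
      0 < (staircaseRows α).getD (i+1) 0 →
      (staircaseRows α).getD (i+2) 0 = (staircaseRows α).getD (i+1) 0 := by
  induction α using List.reverseRecOn with
  | nil => intro i h1 h2; simp [staircaseRows] at h2
  | append_singleton β a ih =>
    intro i h1 h2
    have hβ : ∀ b ∈ β, 0 < b := fun b hb => hα b (by simp [hb])
    rw [getD_sra, getD_sra] at h1
    rw [getD_sra] at h2
    rw [getD_sra, getD_sra]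
    by_cases hc1 : i + 1 < a
    · rw [if_pos (by omega), if_pos hc1] at h1
      omega
    by_cases hc2 : i < a
    · -- i + 1 = a
      rw [if_pos hc2, if_neg hc1, show i + 1 - a = 0 by omega] at h1
      rw [if_neg hc1, show i + 1 - a = 0 by omega] at h2
      rw [if_neg (by omega), if_neg hc1, show i + 2 - a = 1 by omega,
        show i + 1 - a = 0 by omega]
      have hβne : β ≠ [] := by
        intro h
        rw [h] at h1 h2
        have : staircaseRows ([] : List ℕ) = [] := rfl
        rw [this] at h2
        simp at h2
      obtain ⟨β', b, hβeq⟩ := (List.eq_nil_or_concat β).resolve_left hβne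
      rw [List.concat_eq_append] at hβeq
      subst hβeq
      have hb2 : 1 < b := by
        have h := hgt β'.length (by simp)
        rw [List.getD_append _ _ _ _ (by simp), List.getD_append_right _ _ _ _ (by omega),
          show β'.length - β'.length = 0 by omega] at h
        simpa using h
      rw [getD_sra, getD_sra, if_pos hb2, if_pos (by omega)]
    · -- i ≥ a
      rw [if_neg hc2, if_neg hc1, show i + 1 - a = (i - a) + 1 by omega] at h1
      rw [if_neg hc1, show i + 1 - a = (i - a) + 1 by omega] at h2
      rw [if_neg (by omega), if_neg hc1, show i + 2 - a = (i - a) + 2 by omega,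
        show i + 1 - a = (i - a) + 1 by omega]
      apply ih hβ ?_ (i - a) h1 h2
      intro j hj
      have h := hgt j (by simp; omega)
      rwa [List.getD_append _ _ _ _ (by omega)] at h

/-- Location of the bad pattern (p+1, p, p-1) when the multiplicity of p is 1. -/
lemma staircaseRows_badloc (α : List ℕ) (hα : ∀ a ∈ α, 0 < a)
    (p : ℕ) (hp1 : 1 ≤ p) (hp2 : p + 1 ≤ α.length) (hp3 : α.getD (p-1) 0 = 1) :
    ∃ i, (staircaseRows α).getD i 0 = p + 1 ∧ (staircaseRows α).getD (i+1) 0 = p ∧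
      (staircaseRows α).getD (i+2) 0 = p - 1 := by
  induction α using List.reverseRecOn with
  | nil => simp at hp2
  | append_singleton β a ih =>
    have hβ : ∀ b ∈ β, 0 < b := fun b hb => hα b (by simp [hb])
    by_cases hc : p + 1 ≤ β.length
    · have hp3' : β.getD (p-1) 0 = 1 := by
        rwa [List.getD_append _ _ _ _ (by omega)] at hp3
      obtain ⟨i, hi1, hi2, hi3⟩ := ih hβ hc hp3'
      refine ⟨a + i, ?_, ?_, ?_⟩
      · rw [getD_sra, if_neg (by omega), show a + i - a = i by omega]; exact hi1
      · rw [getD_sra, if_neg (by omega), show a + i + 1 - a = i + 1 by omega]; exact hi2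
      · rw [getD_sra, if_neg (by omega), show a + i + 2 - a = i + 2 by omega]; exact hi3
    · have hal : (β ++ [a]).length = β.length + 1 := by simp
      have hpl : p = β.length := by omega
      have hβne : β ≠ [] := by
        intro h; rw [h] at hpl; simp at hpl; omega
      obtain ⟨β', b, hβeq⟩ := (List.eq_nil_or_concat β).resolve_left hβne
      rw [List.concat_eq_append] at hβeq
      subst hβeq
      have hlb : β'.length = p - 1 := by simp at hpl; omega
      have hb1 : b = 1 := by
        have h := hp3
        rw [List.getD_append _ _ _ _ (by simp; omega),
          List.getD_append_right _ _ _ _ (by omega),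
          show p - 1 - β'.length = 0 by omega] at h
        simpa using h
      have ha : 0 < a := hα a (by simp)
      refine ⟨a - 1, ?_, ?_, ?_⟩
      · rw [getD_sra, if_pos (by omega)]
        simp at hpl ⊢
        omega
      · rw [getD_sra, if_neg (by omega), show a - 1 + 1 - a = 0 by omega,
          getD_sra, if_pos (by omega)]
        simp at hpl ⊢
        omega
      · rw [getD_sra, if_neg (by omega), show a - 1 + 2 - a = 1 by omega,
          getD_sra, if_neg (by omega)]
        rw [show (1 : ℕ) - b = 0 by omega]
        rcases List.eq_nil_or_concat β' with rfl | ⟨β'', c, hc2⟩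
        · have : staircaseRows ([] : List ℕ) = [] := rfl
          rw [this]
          simp at hpl ⊢
          omega
        · rw [List.concat_eq_append] at hc2
          subst hc2
          have h0 : (staircaseRows (β'' ++ [c])).getD 0 0 = (β'' ++ [c]).length := by
            apply staircaseRows_head _ (by simp)
            have hle : β''.length ≤ (β'' ++ [c]).length - 1 := by simp
            rw [List.getD_append_right _ _ _ _ hle]
            have : (β'' ++ [c]).length - 1 - β''.length = 0 := by simp
            rw [this]
            simpa using hβ c (by simp)
          rw [h0]
          simp at hpl ⊢
          omega

end Staircase2

section FatChar

/-- Auxiliary: build the composition from a decreasing, small-step finsupp. -/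
lemma fs_aux : ∀ M : ℕ, ∀ d : ℕ →₀ ℕ, d 0 = M →
    (∀ i, d (i+1) ≤ d i) → (∀ i, d i ≤ d (i+1) + 1) →
    ∃ β : List ℕ, (∀ b ∈ β, 0 < b) ∧ β.length = M ∧
      ∀ i, (staircaseRows β).getD i 0 = d i := by
  intro M
  induction M with
  | zero =>
    intro d h0 hanti _
    refine ⟨[], by simp, rfl, ?_⟩
    have hmono : Antitone d := antitone_nat_of_succ_le hanti
    intro i
    have : d i ≤ d 0 := hmono (Nat.zero_le i)
    have : d i = 0 := by omega
    rw [this]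
    rfl
  | succ M ih =>
    intro d h0 hanti hstep
    have hmono : Antitone d := antitone_nat_of_succ_le hanti
    set F : Finset ℕ := d.support.filter (fun i => d i = M + 1) with hF
    have hdc : ∀ x y, x ≤ y → y ∈ F → x ∈ F := by
      intro x y hxy hy
      simp only [hF, Finset.mem_filter, Finsupp.mem_support_iff] at hy ⊢
      have h1 : d y ≤ d x := hmono hxy
      have h2 : d x ≤ d 0 := hmono (Nat.zero_le x)
      omega
    have hFr : F = Finset.range F.card := dcFinset F hdc
    set a := F.card with hac
    have hmem : ∀ i, d i = M + 1 ↔ i < a := by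
      intro i
      constructor
      · intro h
        have : i ∈ F := by
          simp only [hF, Finset.mem_filter, Finsupp.mem_support_iff]
          omega
        rw [hFr] at this
        simpa using this
      · intro h
        have : i ∈ F := by rw [hFr]; simpa using h
        simp only [hF, Finset.mem_filter] at this
        exact this.2
    have ha1 : 1 ≤ a := by
      have := (hmem 0).mp h0
      omega
    have hda : d a = M := by
      have h1 : ¬ (d a = M + 1) := by rw [hmem]; omega
      have h2 : d (a - 1) = M + 1 := (hmem (a-1)).mpr (by omega)
      have h3 := hstep (a - 1)
      have h4 := hanti (a - 1)
      rw [show a - 1 + 1 = a by omega] at h3 h4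
      omega
    set d' : ℕ →₀ ℕ := Finsupp.comapDomain (· + a) d
      (Set.injOn_of_injective (fun x y h => by omega)) with hd'
    have hd'app : ∀ i, d' i = d (i + a) := fun i => rfl
    obtain ⟨β', hβ'pos, hβ'len, hβ'⟩ := ih d' (by rw [hd'app]; simpa using hda)
      (fun i => by rw [hd'app, hd'app, show i + 1 + a = i + a + 1 by omega]; exact hanti (i + a))
      (fun i => by rw [hd'app, hd'app, show i + 1 + a = i + a + 1 by omega]; exact hstep (i + a))
    refine ⟨β' ++ [a], ?_, by simp [hβ'len], ?_⟩
    · intro b hb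
      simp only [List.mem_append, List.mem_singleton] at hb
      rcases hb with hb | rfl
      · exact hβ'pos b hb
      · omega
    · intro i
      rw [getD_sra]
      by_cases hia : i < a
      · rw [if_pos hia, hβ'len]
        exact ((hmem i).mpr hia).symm
      · rw [if_neg hia, hβ' (i - a), hd'app, show i - a + a = i by omega]

lemma isFatStaircase_of_steps (d : ℕ →₀ ℕ)
    (hanti : ∀ i, d (i+1) ≤ d i) (hstep : ∀ i, d i ≤ d (i+1) + 1) :
    IsFatStaircase d := by
  obtain ⟨β, hpos, _, hβ⟩ := fs_aux (d 0) d rfl hanti hstep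
  refine ⟨β, hpos, ?_⟩
  ext i
  rw [show (fatStaircase β) = diagramOfRows (staircaseRows β) from rfl,
    rowContent_diagramOfRows, hβ]

lemma step_of_isFatStaircase (d : ℕ →₀ ℕ) (h : IsFatStaircase d) :
    ∀ i, d i ≤ d (i+1) + 1 := by
  obtain ⟨β, hpos, rfl⟩ := h
  intro i
  rw [show (fatStaircase β) = diagramOfRows (staircaseRows β) from rfl,
    rowContent_diagramOfRows, rowContent_diagramOfRows]
  exact staircaseRows_step β hpos i

end FatChar

section Skew

/-- The skew diagram: staircase rows minus an `m`-row at the top left. -/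
def Dg (L : List ℕ) (m : ℕ) : Diagram := diagramOfRows L \ rowD m

lemma mem_Dg (L : List ℕ) (m i j : ℕ) :
    (i, j) ∈ Dg L m ↔ j < L.getD i 0 ∧ (i = 0 → m ≤ j) := by
  unfold Dg
  rw [Finset.mem_sdiff, mem_diagramOfRows, mem_rowD]
  constructor
  · rintro ⟨h1, h2⟩
    exact ⟨h1, fun h0 => by omega⟩
  · rintro ⟨h1, h2⟩
    refine ⟨h1, ?_⟩
    rintro ⟨rfl, hj⟩
    have := h2 rfl
    omega

/-- `Pattern L m t T`: the entries of `T` follow the cutoff pattern `t`. -/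
def Pattern (L : List ℕ) (m : ℕ) (t : ℕ → ℕ) (T : SSYT (Dg L m)) : Prop :=
  ∀ i j, (i, j) ∈ Dg L m → T.entry (i, j) = if j < t i then i - 1 else i

/-- The filter of cells before `(i0,j0)` with entry `w`, for a pattern tableau. -/
lemma filter_entry_before (L : List ℕ) (m : ℕ) (t : ℕ → ℕ) (T : SSYT (Dg L m))
    (hc0 : t 0 = m) (hc1 : ∀ i, t i ≤ L.getD i 0) (hT : Pattern L m t T)
    (i0 j0 w : ℕ) :
    (Dg L m).filter (fun c' => ReadBefore c' (i0, j0) ∧ T.entry c' = w)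
    = ((Finset.Ico (if i0 = w then max (t w) j0 else t w)
          (if w ≤ i0 then L.getD w 0 else 0)).image (fun j => (w, j)))
      ∪ ((Finset.Ico (if w + 1 = i0 then j0 else 0)
          (if w + 1 ≤ i0 then t (w+1) else 0)).image (fun j => (w+1, j))) := by
  ext ⟨i, j⟩
  simp only [Finset.mem_filter, Finset.mem_union, Finset.mem_image, Finset.mem_Ico]
  constructor
  · rintro ⟨hc, hb, he⟩
    have hb' : i < i0 ∨ (i = i0 ∧ j0 ≤ j) := by simpa [ReadBefore] using hb
    rw [hT i j hc] at he
    rw [mem_Dg] at hc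
    by_cases hlow : j < t i
    · rw [if_pos hlow] at he
      have hi0 : i ≠ 0 := by
        intro h
        subst h
        have := hc.2 rfl
        rw [hc0] at hlow
        omega
      have hiw : i = w + 1 := by omega
      subst hiw
      right
      refine ⟨j, ⟨?_, ?_⟩, rfl⟩
      · rcases hb' with hb' | ⟨hb1, hb2⟩ <;> split_ifs with hh <;> omega
      · rcases hb' with hb' | ⟨hb1, hb2⟩ <;> split_ifs with hh <;> omega
    · rw [if_neg hlow] at he
      subst he
      left
      refine ⟨j, ⟨?_, ?_⟩, rfl⟩
      · rcases hb' with hb' | ⟨hb1, hb2⟩ <;> split_ifs with hh <;> omega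
      · have h1 := hc.1
        rcases hb' with hb' | ⟨hb1, hb2⟩ <;> split_ifs with hh <;> omega
  · rintro (⟨j', ⟨hj1, hj2⟩, heq⟩ | ⟨j', ⟨hj1, hj2⟩, heq⟩)
    · injection heq with h1 h2
      subst h1
      subst h2
      by_cases hwi : w ≤ i0
      case neg => rw [if_neg hwi] at hj2; omega
      rw [if_pos hwi] at hj2
      have hjt : t w ≤ j' := by
        split_ifs at hj1 <;> omega
      have hmem : (w, j') ∈ Dg L m := by
        rw [mem_Dg]
        exact ⟨hj2, fun h0 => by subst h0; rw [hc0] at hjt; omega⟩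
      refine ⟨hmem, ?_, ?_⟩
      · rcases Nat.lt_or_ge w i0 with h | h
        · left; exact h
        · right
          have hwi0 : w = i0 := by omega
          subst hwi0
          rw [if_pos rfl] at hj1
          exact ⟨rfl, by omega⟩
      · rw [hT _ _ hmem, if_neg (by omega)]
    · injection heq with h1 h2
      subst h1
      subst h2
      by_cases hwi : w + 1 ≤ i0
      case neg => rw [if_neg hwi] at hj2; omega
      rw [if_pos hwi] at hj2
      have hmem : (w + 1, j') ∈ Dg L m := by
        rw [mem_Dg]
        have := hc1 (w+1)
        exact ⟨by omega, fun h0 => by omega⟩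
      refine ⟨hmem, ?_, ?_⟩
      · rcases Nat.lt_or_ge (w+1) i0 with h | h
        · left; exact h
        · right
          have hww : w + 1 = i0 := by omega
          subst hww
          rw [if_pos rfl] at hj1
          exact ⟨rfl, hj1⟩
      · rw [hT _ _ hmem, if_pos (by omega)]
        omega

lemma card_entry_before (L : List ℕ) (m : ℕ) (t : ℕ → ℕ) (T : SSYT (Dg L m))
    (hc0 : t 0 = m) (hc1 : ∀ i, t i ≤ L.getD i 0) (hT : Pattern L m t T)
    (i0 j0 w : ℕ) :
    ((Dg L m).filter (fun c' => ReadBefore c' (i0, j0) ∧ T.entry c' = w)).card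
    = ((if w ≤ i0 then L.getD w 0 else 0) - (if i0 = w then max (t w) j0 else t w))
      + ((if w + 1 ≤ i0 then t (w+1) else 0) - (if w + 1 = i0 then j0 else 0)) := by
  rw [filter_entry_before L m t T hc0 hc1 hT i0 j0 w]
  rw [Finset.card_union_of_disjoint]
  · rw [Finset.card_image_of_injective _ (fun a b h => by injection h),
      Finset.card_image_of_injective _ (fun a b h => by injection h),
      Nat.card_Ico, Nat.card_Ico]
  · simp only [Finset.disjoint_left, Finset.mem_image]
    rintro c ⟨j', _, rfl⟩ ⟨j'', _, heq⟩
    injection heq with h1 h2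
    omega

end Skew

section Skew2

lemma lattice_of_pattern (L : List ℕ) (m : ℕ) (t : ℕ → ℕ) (T : SSYT (Dg L m))
    (hc0 : t 0 = m) (hc1 : ∀ i, t i ≤ L.getD i 0) (hc3 : ∀ i, t (i+1) ≤ t i)
    (hA : ∀ v, L.getD (v+1) 0 + t v ≤ L.getD v 0 + t (v+1))
    (hT : Pattern L m t T) : IsLattice T := by
  rintro ⟨i0, j0⟩ hc v
  rw [card_entry_before L m t T hc0 hc1 hT i0 j0 (v+1),
    card_entry_before L m t T hc0 hc1 hT i0 j0 v]
  have h1 := hc1 v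
  have h2 := hc1 (v+1)
  have h3 := hc1 (v+2)
  have h4 := hc3 v
  have h5 := hc3 (v+1)
  have h6 := hA v
  have h7 := hA (v+1)
  split_ifs <;> omega

lemma content_of_pattern (L : List ℕ) (m : ℕ) (t : ℕ → ℕ) (T : SSYT (Dg L m))
    (hc0 : t 0 = m) (hc1 : ∀ i, t i ≤ L.getD i 0) (hT : Pattern L m t T) (w : ℕ) :
    content T w = (L.getD w 0 - t w) + t (w+1) := by
  rw [content_apply]
  have hfe : (Dg L m).filter (fun c => T.entry c = w)
      = (Dg L m).filter (fun c' => ReadBefore c' (w + 2, 0) ∧ T.entry c' = w) := by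
    apply Finset.filter_congr
    rintro ⟨i, j⟩ hc
    constructor
    · intro he
      refine ⟨?_, he⟩
      have := hT i j hc
      rw [he] at this
      left
      simp only
      split_ifs at this <;> omega
    · exact fun h => h.2
  rw [hfe, card_entry_before L m t T hc0 hc1 hT (w+2) 0 w]
  have h1 := hc1 w
  split_ifs <;> omega

def TofEntry (L : List ℕ) (m : ℕ) (t : ℕ → ℕ) : ℕ × ℕ → ℕ :=
  fun c => if c ∈ Dg L m then (if c.2 < t c.1 then c.1 - 1 else c.1) else 0

def Tof (L : List ℕ) (m : ℕ) (t : ℕ → ℕ) (hc0 : t 0 = m)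
    (hc3 : ∀ i, t (i+1) ≤ t i) : SSYT (Dg L m) where
  entry := TofEntry L m t
  rowWeak := by
    intro i j h1 h2
    unfold TofEntry
    rw [if_pos h1, if_pos h2]
    simp only
    split_ifs <;> omega
  colStrict := by
    intro i j h1 h2
    unfold TofEntry
    rw [if_pos h1, if_pos h2]
    simp only
    rw [mem_Dg] at h1 h2
    by_cases hi : i = 0
    · subst hi
      have hm := h1.2 rfl
      have h10 := hc3 0
      rw [if_neg (by omega), if_neg (by omega)]
      omega
    · have := hc3 i
      split_ifs <;> omega
  zero_outside := by
    intro c hc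
    unfold TofEntry
    rw [if_neg hc]

lemma pattern_Tof (L : List ℕ) (m : ℕ) (t : ℕ → ℕ) (hc0 : t 0 = m)
    (hc3 : ∀ i, t (i+1) ≤ t i) : Pattern L m t (Tof L m t hc0 hc3) := by
  intro i j hc
  show TofEntry L m t (i, j) = _
  unfold TofEntry
  rw [if_pos hc]

end Skew2

section Skew3

variable (L : List ℕ) (m : ℕ)

lemma getD_anti_le (hanti : ∀ i, L.getD (i+1) 0 ≤ L.getD i 0) :
    ∀ {i i' : ℕ}, i ≤ i' → L.getD i' 0 ≤ L.getD i 0 := by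
  intro i i' h
  have hA : Antitone (fun i => L.getD i 0) := antitone_nat_of_succ_le hanti
  exact hA h

lemma entry_row_mono (T : SSYT (Dg L m)) {i j j' : ℕ}
    (h1 : (i, j) ∈ Dg L m) (h2 : (i, j') ∈ Dg L m) (hj : j ≤ j') :
    T.entry (i, j) ≤ T.entry (i, j') := by
  obtain ⟨k, rfl⟩ : ∃ k, j' = j + k := ⟨j' - j, by omega⟩
  clear hj
  induction k with
  | zero => exact le_refl _
  | succ k ih =>
    have hmid : (i, j + k) ∈ Dg L m := by
      rw [mem_Dg] at h1 h2 ⊢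
      constructor
      · omega
      · intro h0
        have := h1.2 h0
        omega
    exact le_trans (ih hmid) (T.rowWeak i (j + k) hmid (by exact h2))

lemma entry_col_chain (hanti : ∀ i, L.getD (i+1) 0 ≤ L.getD i 0)
    (T : SSYT (Dg L m)) :
    ∀ (k i j : ℕ), (i, j) ∈ Dg L m → (i + k, j) ∈ Dg L m →
      T.entry (i, j) + k ≤ T.entry (i + k, j) := by
  intro k
  induction k with
  | zero => intro i j h1 h2; simp
  | succ k ih =>
    intro i j h1 h2
    rw [show i + (k+1) = i + k + 1 by omega] at h2 ⊢
    have hmid : (i + k, j) ∈ Dg L m := by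
      rw [mem_Dg] at h1 h2 ⊢
      refine ⟨?_, fun h0 => h1.2 (by omega)⟩
      have hAA := hanti (i + k)
      omega
    have hcs := T.colStrict (i + k) j hmid h2
    have h3 := ih i j h1 hmid
    omega

lemma entry_le_row (hanti : ∀ i, L.getD (i+1) 0 ≤ L.getD i 0)
    (T : SSYT (Dg L m)) (hlat : IsLattice T) :
    ∀ i j, (i, j) ∈ Dg L m → T.entry (i, j) ≤ i := by
  have key : ∀ v i j, (i, j) ∈ Dg L m → T.entry (i, j) = v → v ≤ i := by
    intro v
    induction v with
    | zero => intro i j _ _; omega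
    | succ v ih =>
      intro i j hm hv
      have hl := hlat (i, j) hm v
      have hpos : 0 < ((Dg L m).filter
          (fun c' => ReadBefore c' (i, j) ∧ T.entry c' = v + 1)).card := by
        refine Finset.card_pos.mpr ⟨(i, j), ?_⟩
        rw [Finset.mem_filter]
        exact ⟨hm, Or.inr ⟨rfl, le_refl _⟩, hv⟩
      have hpos2 : 0 < ((Dg L m).filter
          (fun c' => ReadBefore c' (i, j) ∧ T.entry c' = v)).card := by omega
      obtain ⟨⟨i', j'⟩, h'⟩ := Finset.card_pos.mp hpos2
      rw [Finset.mem_filter] at h'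
      obtain ⟨hmem', hb', he'⟩ := h'
      have hb'' : i' < i ∨ (i' = i ∧ j ≤ j') := by simpa [ReadBefore] using hb'
      rcases hb'' with h | ⟨rfl, hjj⟩
      · have := ih i' j' hmem' he'
        omega
      · have := entry_row_mono L m T hm hmem' hjj
        omega
  intro i j hm
  exact key _ i j hm rfl

lemma entry_ge_pred (hanti : ∀ i, L.getD (i+1) 0 ≤ L.getD i 0)
    (T : SSYT (Dg L m)) :
    ∀ i j, 1 ≤ i → (i, j) ∈ Dg L m → i - 1 ≤ T.entry (i, j) := by
  intro i j hi hm
  have h1 : (1, j) ∈ Dg L m := by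
    rw [mem_Dg] at hm ⊢
    constructor
    · have := getD_anti_le L hanti hi
      omega
    · omega
  have hc := entry_col_chain L m hanti T (i - 1) 1 j h1 (by
    rw [show 1 + (i-1) = i by omega]
    exact hm)
  rw [show 1 + (i-1) = i by omega] at hc
  omega

/-- The cutoff function extracted from a lattice tableau. -/
noncomputable def tfun (T : SSYT (Dg L m)) : ℕ → ℕ :=
  fun i => if i = 0 then m
    else ((Finset.range (L.getD i 0)).filter (fun j => T.entry (i, j) + 1 = i)).card

lemma pattern_spec (hanti : ∀ i, L.getD (i+1) 0 ≤ L.getD i 0)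
    (hm0 : m ≤ L.getD 0 0)
    (T : SSYT (Dg L m)) (hlat : IsLattice T) :
    (tfun L m T) 0 = m ∧ (∀ i, tfun L m T i ≤ L.getD i 0) ∧
      (∀ i, tfun L m T (i+1) ≤ tfun L m T i) ∧
      (∀ v, L.getD (v+1) 0 + tfun L m T v ≤ L.getD v 0 + tfun L m T (v+1)) ∧
      Pattern L m (tfun L m T) T := by
  have hc0 : tfun L m T 0 = m := by simp [tfun]
  have hmemrow : ∀ i j, 1 ≤ i → j < L.getD i 0 → (i, j) ∈ Dg L m := by
    intro i j hi hj
    rw [mem_Dg]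
    exact ⟨hj, fun h0 => by omega⟩
  -- the low set of each row i ≥ 1 is downward closed, hence an initial segment
  have hdc : ∀ i, 1 ≤ i →
      (Finset.range (L.getD i 0)).filter (fun j => T.entry (i, j) + 1 = i)
        = Finset.range (tfun L m T i) := by
    intro i hi
    have := dcFinset ((Finset.range (L.getD i 0)).filter (fun j => T.entry (i, j) + 1 = i))
      (by
        intro x y hxy hy
        rw [Finset.mem_filter, Finset.mem_range] at hy ⊢
        refine ⟨by omega, ?_⟩
        have hmy := hmemrow i y hi hy.1
        have hmx := hmemrow i x hi (by omega)
        have h1 := entry_row_mono L m T hmx hmy hxy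
        have h2 := entry_ge_pred L m hanti T i x hi hmx
        omega)
    rw [this]
    congr 1
    simp [tfun, show ¬ (i = 0) by omega]
  have hiff : ∀ i j, 1 ≤ i → j < L.getD i 0 →
      (T.entry (i, j) + 1 = i ↔ j < tfun L m T i) := by
    intro i j hi hj
    rw [← Finset.mem_range (n := tfun L m T i), ← hdc i hi, Finset.mem_filter,
      Finset.mem_range]
    constructor
    · exact fun h => ⟨hj, h⟩
    · exact fun h => h.2
  have hpat : Pattern L m (tfun L m T) T := by
    intro i j hc
    have hcc := hc
    rw [mem_Dg] at hcc
    by_cases hi : i = 0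
    · subst hi
      have hj := hcc.2 rfl
      rw [if_neg (by rw [hc0]; omega)]
      have h1 := entry_le_row L m hanti T hlat 0 j hc
      omega
    · have h1 := entry_le_row L m hanti T hlat i j hc
      have h2 := entry_ge_pred L m hanti T i j (by omega) hc
      by_cases hlow : j < tfun L m T i
      · rw [if_pos hlow]
        have := (hiff i j (by omega) hcc.1).mpr hlow
        omega
      · rw [if_neg hlow]
        have := hiff i j (by omega) hcc.1
        omega
  have hc1 : ∀ i, tfun L m T i ≤ L.getD i 0 := by
    intro i
    by_cases hi : i = 0
    · subst hi
      rw [hc0]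
      exact hm0
    · have : tfun L m T i = ((Finset.range (L.getD i 0)).filter
          (fun j => T.entry (i, j) + 1 = i)).card := by
        simp [tfun, hi]
      rw [this]
      exact le_trans (Finset.card_le_card (Finset.filter_subset _ _)) (by simp)
  have hc3 : ∀ i, tfun L m T (i+1) ≤ tfun L m T i := by
    intro i
    by_cases hi : i = 0
    · subst hi
      rw [show (0:ℕ) + 1 = 1 by omega, hc0]
      -- t 1 ≤ m : any low cell of row 1 is left of column m
      have hsub : (Finset.range (L.getD 1 0)).filter (fun j => T.entry (1, j) + 1 = 1)
          ⊆ Finset.range m := by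
        intro j hj
        rw [Finset.mem_filter, Finset.mem_range] at hj
        rw [Finset.mem_range]
        by_contra hjm
        have h0 : (0, j) ∈ Dg L m := by
          rw [mem_Dg]
          have := getD_anti_le L hanti (show 0 ≤ 1 by omega)
          exact ⟨by omega, fun _ => by omega⟩
        have hcs := T.colStrict 0 j h0 (hmemrow 1 j (by omega) hj.1)
        rw [show (0:ℕ) + 1 = 1 by omega] at hcs
        omega
      have := Finset.card_le_card hsub
      simp only [Finset.card_range] at this
      have heq : tfun L m T 1 = ((Finset.range (L.getD 1 0)).filter
          (fun j => T.entry (1, j) + 1 = 1)).card := by simp [tfun]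
      omega
    · have hsub : (Finset.range (L.getD (i+1) 0)).filter (fun j => T.entry (i+1, j) + 1 = i+1)
          ⊆ (Finset.range (L.getD i 0)).filter (fun j => T.entry (i, j) + 1 = i) := by
        intro j hj
        rw [Finset.mem_filter, Finset.mem_range] at hj ⊢
        have hji : j < L.getD i 0 := by
          have := hanti i
          omega
        refine ⟨hji, ?_⟩
        have hmi := hmemrow i j (by omega) hji
        have hmi1 := hmemrow (i+1) j (by omega) hj.1
        have h1 := T.colStrict i j hmi hmi1
        have h2 := entry_ge_pred L m hanti T i j (by omega) hmi
        omega
      have := Finset.card_le_card hsub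
      have heq1 : tfun L m T (i+1) = ((Finset.range (L.getD (i+1) 0)).filter
          (fun j => T.entry (i+1, j) + 1 = i+1)).card := by simp [tfun]
      have heq2 : tfun L m T i = ((Finset.range (L.getD i 0)).filter
          (fun j => T.entry (i, j) + 1 = i)).card := by simp [tfun, hi]
      omega
  refine ⟨hc0, hc1, hc3, ?_, hpat⟩
  intro v
  by_cases hfull : tfun L m T (v+1) < L.getD (v+1) 0
  · have hmem : (v+1, tfun L m T (v+1)) ∈ Dg L m := hmemrow _ _ (by omega) hfull
    have hl := hlat (v+1, tfun L m T (v+1)) hmem v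
    rw [card_entry_before L m (tfun L m T) T hc0 hc1 hpat _ _ (v+1),
      card_entry_before L m (tfun L m T) T hc0 hc1 hpat _ _ v] at hl
    have h1 := hc1 v
    have h2 := hc1 (v+1)
    have h3 := hc1 (v+2)
    split_ifs at hl <;> omega
  · have h2 := hc1 (v+1)
    have h1 := hc1 v
    omega

end Skew3

section Steps

lemma pattern_d_steps (L : List ℕ) (m : ℕ) (t : ℕ → ℕ)
    (hanti : ∀ i, L.getD (i+1) 0 ≤ L.getD i 0)
    (hstep : ∀ i, L.getD i 0 ≤ L.getD (i+1) 0 + 1)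
    (hbd : ∀ i, L.getD i 0 = L.getD (i+1) 0 + 1 → 0 < L.getD (i+1) 0 →
      L.getD (i+2) 0 = L.getD (i+1) 0)
    (hc1 : ∀ i, t i ≤ L.getD i 0) (hc3 : ∀ i, t (i+1) ≤ t i)
    (hA : ∀ v, L.getD (v+1) 0 + t v ≤ L.getD v 0 + t (v+1)) :
    ∀ v, ((L.getD (v+1) 0 - t (v+1)) + t (v+2) ≤ (L.getD v 0 - t v) + t (v+1)) ∧
      ((L.getD v 0 - t v) + t (v+1) ≤ ((L.getD (v+1) 0 - t (v+1)) + t (v+2)) + 1) := by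
  intro v
  have h1 := hc1 v
  have h2 := hc1 (v+1)
  have h3 := hc1 (v+2)
  have h4 := hc3 v
  have h5 := hc3 (v+1)
  have h6 := hA v
  have h7 := hA (v+1)
  have h8 := hanti v
  have h9 := hanti (v+1)
  have h10 := hstep v
  have h11 := hstep (v+1)
  rw [show v + 1 + 1 = v + 2 by omega] at h5 h7 h9 h11
  by_cases hb : L.getD v 0 = L.getD (v+1) 0 + 1
  · by_cases hz : 0 < L.getD (v+1) 0
    · have h12 := hbd v hb hz
      rw [show v + 1 + 1 = v + 2 by omega] at h12
      omega
    · omega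
  · omega

end Steps

section Bad

/-- The set of row lengths to be decremented in the bad filling. -/
def Sbad (n m p : ℕ) : Finset ℕ :=
  Finset.Icc (p + 1 - min m p) p ∪ Finset.Ioc (n - (m - min m p)) n

lemma mem_Sbad (n m p x : ℕ) :
    x ∈ Sbad n m p ↔ (p + 1 - min m p ≤ x ∧ x ≤ p) ∨ (n - (m - min m p) < x ∧ x ≤ n) := by
  unfold Sbad
  simp [Finset.mem_union, Finset.mem_Icc, Finset.mem_Ioc]

/-- Bad cutoffs. -/
def tbad (L : List ℕ) (n m p : ℕ) : ℕ → ℕ :=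
  fun i => ((Sbad n m p).filter (fun x => x ≤ L.getD i 0)).card

lemma Sbad_card (n m p : ℕ) (hp1 : 1 ≤ p) (hpn : p + 1 ≤ n) (hmn : m < n) :
    (Sbad n m p).card = m := by
  unfold Sbad
  rw [Finset.card_union_of_disjoint, Nat.card_Icc, Nat.card_Ioc]
  · omega
  · simp only [Finset.disjoint_left, Finset.mem_Icc, Finset.mem_Ioc]
    intro x hx hx2
    omega

lemma tbad_c0 (L : List ℕ) (n m p : ℕ) (hp1 : 1 ≤ p) (hpn : p + 1 ≤ n) (hmn : m < n)
    (hl0 : L.getD 0 0 = n) : tbad L n m p 0 = m := by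
  unfold tbad
  rw [hl0]
  rw [Finset.filter_true_of_mem, Sbad_card n m p hp1 hpn hmn]
  intro x hx
  rw [mem_Sbad] at hx
  omega

lemma tbad_c1 (L : List ℕ) (n m p : ℕ) (hp1 : 1 ≤ p) :
    ∀ i, tbad L n m p i ≤ L.getD i 0 := by
  intro i
  unfold tbad
  have hsub : (Sbad n m p).filter (fun x => x ≤ L.getD i 0) ⊆
      Finset.Icc 1 (L.getD i 0) := by
    intro x hx
    rw [Finset.mem_filter, mem_Sbad] at hx
    rw [Finset.mem_Icc]
    omega
  have := Finset.card_le_card hsub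
  rw [Nat.card_Icc] at this
  omega

lemma tbad_c3 (L : List ℕ) (n m p : ℕ) (hanti : ∀ i, L.getD (i+1) 0 ≤ L.getD i 0) :
    ∀ i, tbad L n m p (i+1) ≤ tbad L n m p i := by
  intro i
  unfold tbad
  apply Finset.card_le_card
  intro x hx
  rw [Finset.mem_filter] at hx ⊢
  have := hanti i
  exact ⟨hx.1, by omega⟩

lemma tbad_hA (L : List ℕ) (n m p : ℕ) (hanti : ∀ i, L.getD (i+1) 0 ≤ L.getD i 0) :
    ∀ v, L.getD (v+1) 0 + tbad L n m p v ≤ L.getD v 0 + tbad L n m p (v+1) := by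
  intro v
  unfold tbad
  have hsub : (Sbad n m p).filter (fun x => x ≤ L.getD v 0) ⊆
      ((Sbad n m p).filter (fun x => x ≤ L.getD (v+1) 0)) ∪
        Finset.Ioc (L.getD (v+1) 0) (L.getD v 0) := by
    intro x hx
    rw [Finset.mem_filter] at hx
    rw [Finset.mem_union, Finset.mem_filter, Finset.mem_Ioc]
    by_cases hc : x ≤ L.getD (v+1) 0
    · left; exact ⟨hx.1, hc⟩
    · right; omega
  have h1 := Finset.card_le_card hsub
  have h2 := Finset.card_union_le ((Sbad n m p).filter (fun x => x ≤ L.getD (v+1) 0))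
    (Finset.Ioc (L.getD (v+1) 0) (L.getD v 0))
  rw [Nat.card_Ioc] at h2
  have := hanti v
  omega

lemma tbad_eq1 (L : List ℕ) (n m p : ℕ) (hp1 : 1 ≤ p) (hpn : p + 1 ≤ n) (hmn : m < n)
    (i1 : ℕ) (h1 : L.getD i1 0 = p + 1) (h2 : L.getD (i1+1) 0 = p) :
    tbad L n m p i1 = tbad L n m p (i1+1) := by
  unfold tbad
  congr 1
  apply Finset.filter_congr
  intro x hx
  rw [mem_Sbad] at hx
  rw [h1, h2]
  constructor <;> intro h <;> omega

lemma tbad_eq2 (L : List ℕ) (n m p : ℕ) (hp1 : 1 ≤ p) (hpn : p + 1 ≤ n)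
    (hm1 : 1 ≤ m) (hmn : m < n)
    (i1 : ℕ) (h2 : L.getD (i1+1) 0 = p) (h3 : L.getD (i1+2) 0 = p - 1) :
    tbad L n m p (i1+1) = tbad L n m p (i1+2) + 1 := by
  unfold tbad
  have hpm : p ∈ Sbad n m p := by
    rw [mem_Sbad]
    left
    omega
  have heq : (Sbad n m p).filter (fun x => x ≤ L.getD (i1+1) 0)
      = insert p ((Sbad n m p).filter (fun x => x ≤ L.getD (i1+2) 0)) := by
    ext x
    rw [Finset.mem_insert, Finset.mem_filter, Finset.mem_filter, h2, h3]
    constructor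
    · rintro ⟨hs, hle⟩
      by_cases hc : x = p
      · left; exact hc
      · right
        refine ⟨hs, ?_⟩
        rw [mem_Sbad] at hs
        omega
    · rintro (rfl | ⟨hs, hle⟩)
      · exact ⟨hpm, by omega⟩
      · exact ⟨hs, by omega⟩
  rw [heq, Finset.card_insert_of_notMem]
  rw [Finset.mem_filter, h3]
  rintro ⟨_, hle⟩
  omega

end Bad

/-- for a composition `α` of length `n ≥ 2` and `1 ≤ m < n`, the
skew diagram `δ_α/(m)` is a sum of fat staircases iff `α_j > 1` for all
`j = 1, …, n-1` (0-based indices below). -/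
theorem fatStaircase_skew_row_iff (α : List ℕ) (hα : ∀ a ∈ α, 0 < a)
    (hn : 2 ≤ α.length) (m : ℕ) (hm1 : 1 ≤ m) (hm2 : m < α.length) :
    IsSumOfFatStaircases (fatStaircase α \ rowD m) ↔
      ∀ j < α.length - 1, 1 < α.getD j 0 := by
  have hne : α ≠ [] := by intro h; rw [h] at hn; simp at hn
  have hlast : 0 < α.getD (α.length - 1) 0 := by
    rw [List.getD_eq_getElem α 0 (by omega)]
    exact hα _ (List.getElem_mem _)
  have hl0 : (staircaseRows α).getD 0 0 = α.length := staircaseRows_head α hne hlast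
  have hanti := staircaseRows_anti α hα
  have hstep := staircaseRows_step α hα
  have hm0 : m ≤ (staircaseRows α).getD 0 0 := by omega
  have hDeq : fatStaircase α \ rowD m = Dg (staircaseRows α) m := rfl
  rw [hDeq]
  constructor
  · intro hsum j hj
    by_contra hle
    have hj1 : α.getD j 0 = 1 := by
      have hmem : α.getD j 0 ∈ α := by
        rw [List.getD_eq_getElem α 0 (by omega)]
        exact List.getElem_mem _
      have := hα _ hmem
      omega
    set n := α.length with hn'
    set p := j + 1 with hp'
    have hp1 : 1 ≤ p := by omega
    have hp2 : p + 1 ≤ n := by omega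
    obtain ⟨i1, hL1, hL2, hL3⟩ := staircaseRows_badloc α hα p hp1 hp2
      (by rw [show p - 1 = j by omega]; exact hj1)
    set L := staircaseRows α with hLd
    set t := tbad L n m p with htd
    have hc0 : t 0 = m := tbad_c0 L n m p hp1 hp2 hm2 hl0
    have hc1 : ∀ i, t i ≤ L.getD i 0 := tbad_c1 L n m p hp1
    have hc3 : ∀ i, t (i+1) ≤ t i := tbad_c3 L n m p hanti
    have hA : ∀ v, L.getD (v+1) 0 + t v ≤ L.getD v 0 + t (v+1) := tbad_hA L n m p hanti
    set T := Tof L m t hc0 hc3 with hTd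
    have hpat : Pattern L m t T := pattern_Tof L m t hc0 hc3
    have hlat : IsLattice T := lattice_of_pattern L m t T hc0 hc1 hc3 hA hpat
    have hcnt := content_of_pattern L m t T hc0 hc1 hpat
    have hne0 : lrCount (Dg L m) (content T) ≠ 0 := by
      unfold lrCount
      rw [Nat.card_ne_zero]
      exact ⟨⟨⟨T, hlat, rfl⟩⟩, finite_lattice_subtype _ _⟩
    have hfs := hsum (content T) hne0
    have hstep' := step_of_isFatStaircase _ hfs i1
    have he1 := tbad_eq1 L n m p hp1 hp2 hm2 i1 hL1 hL2
    have he2 := tbad_eq2 L n m p hp1 hp2 hm1 hm2 i1 hL2 hL3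
    have hv1 := hcnt i1
    have hv2 := hcnt (i1+1)
    rw [show i1 + 1 + 1 = i1 + 2 by omega] at hv2
    rw [hL1] at hv1
    rw [hL2] at hv2
    rw [← htd] at he1 he2
    have ht1 := hc1 (i1+1)
    rw [hL2] at ht1
    rw [hv1, hv2] at hstep'
    omega
  · intro hgt d hd
    unfold lrCount at hd
    rw [Nat.card_ne_zero] at hd
    obtain ⟨⟨⟨T, hlat, hcT⟩⟩, _⟩ := hd
    obtain ⟨hc0, hc1, hc3, hA, hpat⟩ := pattern_spec (staircaseRows α) m hanti hm0 T hlat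
    have hbd := staircaseRows_hbd α hα (by intro j' hj'; exact hgt j' (by omega))
    have hsteps := pattern_d_steps (staircaseRows α) m (tfun (staircaseRows α) m T)
      hanti hstep hbd hc1 hc3 hA
    have hcnt := content_of_pattern (staircaseRows α) m _ T hc0 hc1 hpat
    rw [← hcT]
    apply isFatStaircase_of_steps
    · intro i
      rw [hcnt (i+1), hcnt i]
      rw [show i + 1 + 1 = i + 2 by omega]
      exact (hsteps i).1
    · intro i
      rw [hcnt i, hcnt (i+1)]
      rw [show i + 1 + 1 = i + 2 by omega]
      exact (hsteps i).2
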